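/- arXiv:2001.02745 — 2 statements merged into one kernel-verified Lean document; each statement's English description precedes it below -/
import Mathlib

section
/- Let V be a finite set of points on the unit sphere centered at the origin in ℝⁿ such that V is symmetric about the origin (closed under x ↦ −x) and fix P₀ ∈ V such that every distance in D = { ‖P − Q‖ : P, Q ∈ V, P ≠ Q } is realized as ‖P₀ − P‖ for some P ∈ V. If k is the cardinality of D, then ∑_{d ∈ D} d² = 2k + 2. -/
open Finset

open scoped RealInnerProductSpace

theorem sum_sq_distinct_distances_symmetric (n : ℕ)
    (V : Finset (EuclideanSpace ℝ (Fin n))) (hcard : 2 ≤ V.card)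
    (hnorm : ∀ P ∈ V, ‖P‖ = 1)
    (hsymm : ∀ P ∈ V, -P ∈ V)
    (P₀ : EuclideanSpace ℝ (Fin n)) (hP₀ : P₀ ∈ V)
    (D : Finset ℝ)
    (hD : ∀ d : ℝ, d ∈ D ↔ ∃ P ∈ V, ∃ Q ∈ V, P ≠ Q ∧ d = ‖P - Q‖)
    (hreal : ∀ d ∈ D, ∃ P ∈ V, d = ‖P₀ - P‖) :
    ∑ d ∈ D, d ^ 2 = 2 * (D.card : ℝ) + 2 := by
  classical
  have hP₀n : ‖P₀‖ = 1 := hnorm _ hP₀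
  have hP₀ne : P₀ ≠ 0 := by
    intro h; rw [h, norm_zero] at hP₀n; norm_num at hP₀n
  -- squared distance formula
  have hsq : ∀ P ∈ V, ‖P₀ - P‖ ^ 2 = 2 - 2 * ⟪P₀, P⟫ := by
    intro P hP
    rw [norm_sub_sq_real, hP₀n, hnorm P hP]
    ring
  -- elements of D are positive
  have hDpos : ∀ d ∈ D, 0 < d := by
    intro d hd
    obtain ⟨P, hP, Q, hQ, hPQ, rfl⟩ := (hD d).1 hd
    exact norm_pos_iff.2 (sub_ne_zero.2 hPQ)
  set f : ℝ → ℝ := fun d => 1 - d ^ 2 / 2 with hf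
  set T : Finset ℝ := D.image f with hT
  -- f is injective on D
  have hinj : Set.InjOn f D := by
    intro a ha b hb hab
    have ha' := hDpos a ha
    have hb' := hDpos b hb
    have : a ^ 2 = b ^ 2 := by simp only [hf] at hab; linarith
    nlinarith
  -- membership in T
  have hTmem : ∀ t : ℝ, t ∈ T ↔ ∃ P ∈ V, P ≠ P₀ ∧ t = ⟪P₀, P⟫ := by
    intro t
    constructor
    · rintro ht
      obtain ⟨d, hd, rfl⟩ := Finset.mem_image.1 ht
      obtain ⟨P, hP, rfl⟩ := hreal d hd
      have hne : P ≠ P₀ := by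
        intro h
        have := hDpos _ hd
        rw [h, sub_self, norm_zero] at this
        exact lt_irrefl _ this
      refine ⟨P, hP, hne, ?_⟩
      have := hsq P hP
      simp only [hf]
      linarith
    · rintro ⟨P, hP, hne, rfl⟩
      have hd : ‖P₀ - P‖ ∈ D := (hD _).2 ⟨P₀, hP₀, P, hP, fun h => hne h.symm, rfl⟩
      refine Finset.mem_image.2 ⟨‖P₀ - P‖, hd, ?_⟩
      have := hsq P hP
      simp only [hf]
      linarith
  -- t = 1 is impossible, t = -1 means P = -P₀
  have hne1 : ∀ t ∈ T, t ≠ 1 := by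
    intro t ht h1
    obtain ⟨P, hP, hne, rfl⟩ := (hTmem t).1 ht
    have h := hsq P hP
    rw [h1] at h
    have : ‖P₀ - P‖ ^ 2 = 0 := by linarith
    have : P₀ - P = 0 := by
      have := sq_eq_zero_iff.1 this
      simpa using this
    exact hne (by rw [sub_eq_zero] at this; exact this.symm)
  have hneg1 : (-1 : ℝ) ∈ T := by
    refine (hTmem _).2 ⟨-P₀, hsymm _ hP₀, ?_, ?_⟩
    · intro h
      apply hP₀ne
      have h2 : P₀ + P₀ = 0 := add_eq_zero_iff_eq_neg.2 h.symm
      have h3 : (2 : ℝ) • P₀ = 0 := by rw [two_smul]; exact h2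
      simpa using (smul_eq_zero.1 h3).resolve_left (by norm_num)
    · rw [inner_neg_right, real_inner_self_eq_norm_sq, hP₀n]; norm_num
  have hm1 : ∀ t ∈ T, t = -1 → ∀ P ∈ V, t = ⟪P₀, P⟫ → P = -P₀ := by
    intro t ht h1 P hP hip
    have hnP : -P ∈ V := hsymm P hP
    have h := hsq (-P) hnP
    rw [inner_neg_right, ← hip, h1] at h
    have h0 : ‖P₀ - -P‖ ^ 2 = 0 := by linarith
    have : P₀ - -P = 0 := by simpa using sq_eq_zero_iff.1 h0
    have : -P = P₀ := by rwa [sub_eq_zero, eq_comm] at this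
    rw [← this]; simp
  -- S = T without -1 is closed under negation
  set S : Finset ℝ := T.erase (-1) with hS
  have hSneg : ∀ t ∈ S, -t ∈ S := by
    intro t ht
    have htT := Finset.mem_of_mem_erase ht
    have htne : t ≠ -1 := Finset.ne_of_mem_erase ht
    obtain ⟨P, hP, hne, rfl⟩ := (hTmem t).1 htT
    refine Finset.mem_erase.2 ⟨?_, (hTmem _).2 ⟨-P, hsymm P hP, ?_, by rw [inner_neg_right]⟩⟩
    · intro h
      exact hne1 _ htT (by linarith [neg_eq_iff_eq_neg.1 h])
    · intro h
      apply htne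
      have hP' : P = -P₀ := by rw [← h]; simp
      rw [hP', inner_neg_right, real_inner_self_eq_norm_sq, hP₀n]; norm_num
  -- sum over S is zero
  have hSsum : ∑ t ∈ S, t = 0 :=
    Finset.sum_involution (fun t _ => -t) (fun a _ => by ring)
      (fun a _ h0 h => h0 (by have h2 : -a = a := h; linarith)) (fun a ha => hSneg a ha) (fun a _ => by ring)
  have hTsum : ∑ t ∈ T, t = -1 := by
    rw [← Finset.insert_erase hneg1, Finset.sum_insert (Finset.notMem_erase _ _), ← hS, hSsum]
    ring
  -- conclude
  have hcardT : T.card = D.card := Finset.card_image_of_injOn hinj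
  have hsum2 : ∑ d ∈ D, f d = ∑ t ∈ T, t := by
    rw [hT, Finset.sum_image (fun a ha b hb => hinj ha hb)]
  have : ∑ d ∈ D, (d ^ 2) = ∑ d ∈ D, (2 - 2 * f d) := by
    apply Finset.sum_congr rfl
    intro d _
    simp only [hf]; ring
  rw [this, Finset.sum_sub_distrib, Finset.sum_const, ← Finset.mul_sum, hsum2, hTsum]
  simp
  ring
end

section
/- Under the hypotheses of the previous bound (V a finite set of unit vectors not symmetric about the origin, with transitive symmetry group fixing only the origin, D its set of k distinct chord lengths, and R the set of r non-diameter chord lengths of AntiSym(V) not in D), one has r ≤ k. -/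
open Finset

theorem card_new_antipodal_distances_le (n : ℕ)
    (V : Finset (EuclideanSpace ℝ (Fin n)))
    (hnorm : ∀ P ∈ V, ‖P‖ = 1)
    (hnonsymm : ¬ ∀ P ∈ V, -P ∈ V)
    (A : Finset (EuclideanSpace ℝ (Fin n))) (hA : ∀ P, P ∈ A ↔ P ∈ V ∨ -P ∈ V)
    (D : Finset ℝ)
    (hD : ∀ d : ℝ, d ∈ D ↔ ∃ P ∈ V, ∃ Q ∈ V, P ≠ Q ∧ d = ‖P - Q‖)
    (R : Finset ℝ)
    (hR : ∀ d : ℝ, d ∈ R ↔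
      (∃ P ∈ A, ∃ Q ∈ A, P ≠ Q ∧ d = ‖P - Q‖) ∧ d ≠ 2 ∧ d ∉ D)
    (P₀ : EuclideanSpace ℝ (Fin n)) (hP₀ : P₀ ∈ V)
    (hreal : ∀ d ∈ D, ∃ P ∈ V, d = ‖P₀ - P‖) :
    R.card ≤ D.card := by
  have key : ∀ d ∈ R, Real.sqrt (4 - d^2) ∈ D ∧ 0 ≤ d ∧ d < 2 := by
    intro d hd
    rw [hR] at hd
    obtain ⟨⟨P, hP, Q, hQ, hPQ, hdPQ⟩, hd2, hdD⟩ := hd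
    rw [hA] at hP hQ
    -- reduce to: ∃ a b ∈ V, a ≠ b, d = ‖a + b‖
    have hmain : ∃ a ∈ V, ∃ b ∈ V, a ≠ b ∧ d = ‖a + b‖ := by
      rcases hP with hP | hP <;> rcases hQ with hQ | hQ
      · exact absurd ((hD d).mpr ⟨P, hP, Q, hQ, hPQ, hdPQ⟩) hdD
      · refine ⟨P, hP, -Q, hQ, ?_, by rw [hdPQ, sub_eq_add_neg]⟩
        intro h
        apply hd2
        rw [hdPQ, show P - Q = P + P by rw [h]; abel, ← two_smul ℝ P,
          norm_smul]
        simp [hnorm P hP]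
      · refine ⟨-P, hP, Q, hQ, ?_, ?_⟩
        · intro h
          apply hd2
          rw [hdPQ, show P - Q = -(Q + Q) by rw [← h]; abel, norm_neg,
            ← two_smul ℝ Q, norm_smul]
          simp [hnorm Q hQ]
        · rw [hdPQ, show P - Q = -(-P + Q) by abel, norm_neg]
      · refine absurd ((hD d).mpr ⟨-P, hP, -Q, hQ, fun h => hPQ (by
          have := congrArg Neg.neg h; simpa using this), by
          rw [hdPQ, show P - Q = -(-P - -Q) by abel, norm_neg]⟩) hdD
    obtain ⟨a, ha, b, hb, hab, hdab⟩ := hmain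
    have ha1 : ‖a‖ = 1 := hnorm a ha
    have hb1 : ‖b‖ = 1 := hnorm b hb
    have hpar : ‖a + b‖^2 + ‖a - b‖^2 = 4 := by
      have h1 := @norm_add_sq_real (EuclideanSpace ℝ (Fin n)) _ _ a b
      have h2 := @norm_sub_sq_real (EuclideanSpace ℝ (Fin n)) _ _ a b
      rw [ha1, hb1] at h1 h2
      nlinarith
    have hd0 : 0 ≤ d := hdab ▸ norm_nonneg _
    have hle : d ≤ 2 := by
      rw [hdab]
      calc ‖a + b‖ ≤ ‖a‖ + ‖b‖ := norm_add_le a b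
        _ = 2 := by rw [ha1, hb1]; norm_num
    have hlt : d < 2 := lt_of_le_of_ne hle hd2
    have heq : 4 - d^2 = ‖a - b‖^2 := by rw [hdab]; linarith
    refine ⟨?_, hd0, hlt⟩
    rw [heq, Real.sqrt_sq (norm_nonneg _)]
    exact (hD _).mpr ⟨a, ha, b, hb, hab, rfl⟩
  apply Finset.card_le_card_of_injOn (fun d => Real.sqrt (4 - d^2))
  · intro d hd; exact (key d hd).1
  · intro d₁ h₁ d₂ h₂ heq
    obtain ⟨-, h10, h12⟩ := key d₁ h₁
    obtain ⟨-, h20, h22⟩ := key d₂ h₂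
    have e1 : Real.sqrt (4 - d₁^2) ^ 2 = 4 - d₁^2 :=
      Real.sq_sqrt (by nlinarith)
    have e2 : Real.sqrt (4 - d₂^2) ^ 2 = 4 - d₂^2 :=
      Real.sq_sqrt (by nlinarith)
    simp only at heq
    nlinarith [heq ▸ e1]
end
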